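/- Let f, g : [0,7] → [0,7] be the piecewise functions defined with α = log 2/log 3, f₂(x)=x^α, f₃(x)=1−(1−x)^α, and c the Cantor function: f equals f₃(x) on [0,1], 1+f₂(x−1) on (1,2], 2+c(x−2) on (2,3], 3+f₃(x−3) on (3,4], and k+f₂(x−k) on (k,k+1] for k=4,5,6; g is identical except g(x)=x on (2,3]. Then ω_f = ω_g on [0,7]. -/
import Mathlib


noncomputable def modCont (f : ℝ → ℝ) (a b : ℝ) (δ : ℝ) : ℝ :=
  sSup {d : ℝ | ∃ x ∈ Set.Icc a b, ∃ y ∈ Set.Icc a b, |x - y| ≤ δ ∧ d = |f x - f y|}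

def AbsolutelyContinuousOn (g : ℝ → ℝ) (a b : ℝ) : Prop :=
  ∀ ε > (0:ℝ), ∃ δ > (0:ℝ), ∀ n : ℕ, ∀ x y : ℕ → ℝ,
    (∀ i < n, a ≤ x i ∧ x i ≤ y i ∧ y i ≤ b) →
    (∀ i < n, ∀ j < n, i ≠ j → Disjoint (Set.Ioo (x i) (y i)) (Set.Ioo (x j) (y j))) →
    (∑ i ∈ Finset.range n, (y i - x i)) < δ →
    (∑ i ∈ Finset.range n, |g (y i) - g (x i)|) < ε

/-- The standard Cantor function is the unique monotone function on `[0,1]` with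
`c 0 = 0`, `c 1 = 1`, satisfying the self-similarity relations
`c (x/3) = c x / 2` and `c ((x+2)/3) = (1 + c x)/2`. -/
def IsCantorFunction (c : ℝ → ℝ) : Prop :=
  MonotoneOn c (Set.Icc 0 1) ∧ c 0 = 0 ∧ c 1 = 1 ∧
  (∀ x ∈ Set.Icc (0:ℝ) 1, c (x / 3) = c x / 2) ∧
  (∀ x ∈ Set.Icc (0:ℝ) 1, c ((x + 2) / 3) = (1 + c x) / 2)

noncomputable def cantorAlpha : ℝ := Real.log 2 / Real.log 3

/-- The function `f` of the paper, built from the Cantor function `c`. -/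
noncomputable def paperF (c : ℝ → ℝ) (x : ℝ) : ℝ :=
  if x ≤ 1 then 1 - (1 - x) ^ cantorAlpha
  else if x ≤ 2 then 1 + (x - 1) ^ cantorAlpha
  else if x ≤ 3 then 2 + c (x - 2)
  else if x ≤ 4 then 3 + (1 - (1 - (x - 3)) ^ cantorAlpha)
  else if x ≤ 5 then 4 + (x - 4) ^ cantorAlpha
  else if x ≤ 6 then 5 + (x - 5) ^ cantorAlpha
  else 6 + (x - 6) ^ cantorAlpha

/-- The function `g` of the paper: same as `paperF` but with the identity on `(2,3]`. -/
noncomputable def paperG (x : ℝ) : ℝ :=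
  if x ≤ 1 then 1 - (1 - x) ^ cantorAlpha
  else if x ≤ 2 then 1 + (x - 1) ^ cantorAlpha
  else if x ≤ 3 then x
  else if x ≤ 4 then 3 + (1 - (1 - (x - 3)) ^ cantorAlpha)
  else if x ≤ 5 then 4 + (x - 4) ^ cantorAlpha
  else if x ≤ 6 then 5 + (x - 5) ^ cantorAlpha
  else 6 + (x - 6) ^ cantorAlpha

namespace CF
local notation "α" => cantorAlpha

lemma alpha_pos : 0 < cantorAlpha := by unfold cantorAlpha; positivity

lemma alpha_lt_one : cantorAlpha < 1 := by
  unfold cantorAlpha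
  rw [div_lt_one (by positivity)]
  exact Real.log_lt_log (by norm_num) (by norm_num)

lemma half_le_alpha : 1/2 ≤ cantorAlpha := by
  unfold cantorAlpha
  rw [le_div_iff₀ (by positivity)]
  have h4 : Real.log 4 = 2 * Real.log 2 := by
    rw [show (4:ℝ) = 2^2 by norm_num, Real.log_pow]; push_cast; ring
  have h : Real.log 3 ≤ Real.log 4 := Real.log_le_log (by norm_num) (by norm_num)
  nlinarith [Real.log_pos (by norm_num : (1:ℝ) < 2)]

lemma three_rpow : (3:ℝ) ^ cantorAlpha = 2 := by
  rw [Real.rpow_def_of_pos (by norm_num), cantorAlpha]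
  rw [mul_div_assoc', mul_comm, mul_div_assoc, div_self (by positivity : Real.log 3 ≠ 0), mul_one,
    Real.exp_log (by norm_num)]

lemma rpow_three_mul {t : ℝ} (ht : 0 ≤ t) : (3*t) ^ α = 2 * t ^ α := by
  rw [Real.mul_rpow (by norm_num) ht, three_rpow]

lemma rpow_self_le {t : ℝ} (h0 : 0 ≤ t) (h1 : t ≤ 1) : t ≤ t ^ α := by
  rcases eq_or_lt_of_le h0 with h|h
  · rw [← h, Real.zero_rpow (ne_of_gt alpha_pos)]
  · calc t = t ^ (1:ℝ) := (Real.rpow_one t).symm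
    _ ≤ t ^ α := Real.rpow_le_rpow_of_exponent_ge h h1 alpha_lt_one.le

lemma rpow_le_one' {t : ℝ} (h0 : 0 ≤ t) (h1 : t ≤ 1) : t ^ α ≤ 1 :=
  Real.rpow_le_one h0 h1 alpha_pos.le

lemma rpow_nonneg' {t : ℝ} (h0 : 0 ≤ t) : 0 ≤ t ^ α := Real.rpow_nonneg h0 α

lemma rpow_mono {s t : ℝ} (h0 : 0 ≤ s) (h : s ≤ t) : s ^ α ≤ t ^ α :=
  Real.rpow_le_rpow h0 h alpha_pos.le

/-- I3: for p ∈ [0,1], 1 ≤ p^α + (1-p)^α. -/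
lemma one_le_rpow_add {p : ℝ} (h0 : 0 ≤ p) (h1 : p ≤ 1) : 1 ≤ p ^ α + (1-p) ^ α := by
  have := rpow_self_le h0 h1
  have := rpow_self_le (by linarith : (0:ℝ) ≤ 1-p) (by linarith)
  linarith

/-- concavity with weights -/
lemma conc {x y p q : ℝ} (hx : 0 ≤ x) (hy : 0 ≤ y) (hp : 0 ≤ p) (hq : 0 ≤ q)
    (hpq : p + q = 1) : p * x ^ α + q * y ^ α ≤ (p*x + q*y) ^ α := by
  have h := (Real.concaveOn_rpow alpha_pos.le alpha_lt_one.le).2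
    (Set.mem_Ici.mpr hx) (Set.mem_Ici.mpr hy) hp hq hpq
  simpa using h

/-- K2: for u ∈ [0,1], 1 + u^α ≤ (u+2)^α. -/
lemma one_add_rpow_le {u : ℝ} (h0 : 0 ≤ u) (h1 : u ≤ 1) : 1 + u ^ α ≤ (u+2) ^ α := by
  -- 2 u^α ≤ 1 + u via u^α ≤ √u ≤ (1+u)/2
  have hsq : u ^ α ≤ Real.sqrt u := by
    rw [show Real.sqrt u = u ^ (1/2 : ℝ) from Real.sqrt_eq_rpow u]
    rcases eq_or_lt_of_le h0 with h|h
    · rw [← h, Real.zero_rpow (ne_of_gt alpha_pos), Real.zero_rpow (by norm_num)]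
    · exact Real.rpow_le_rpow_of_exponent_ge h h1 half_le_alpha
  have hamgm : 2 * Real.sqrt u ≤ 1 + u := by
    nlinarith [Real.sq_sqrt h0, Real.sqrt_nonneg u, sq_nonneg (Real.sqrt u - 1)]
  have key : 2 * u ^ α ≤ 1 + u := by linarith
  -- concavity: weights p = (1-u)/(3-u) at u, q = 2/(3-u) at 3
  have h3u : (0:ℝ) < 3 - u := by linarith
  have hc := conc (x := u) (y := 3) (p := (1-u)/(3-u)) (q := 2/(3-u)) h0 (by norm_num)
    (div_nonneg (by linarith) (by linarith)) (div_nonneg (by norm_num) (by linarith))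
    (by field_simp; ring)
  have hx : (1-u)/(3-u) * u + 2/(3-u) * 3 = u + 2 := by field_simp; ring
  rw [hx, three_rpow] at hc
  have hu1 : 0 ≤ u ^ α := rpow_nonneg' h0
  -- hc : (1-u)/(3-u) * u^α + 2/(3-u) * 2 ≤ (u+2)^α
  have expand : 1 + u ^ α ≤ (1-u)/(3-u) * u ^ α + 2/(3-u) * 2 := by
    rw [div_mul_eq_mul_div, div_mul_eq_mul_div, ← add_div, le_div_iff₀ h3u]
    nlinarith
  linarith

/-- K3: for a,b ∈ [0,1/3], a^α + b^α ≤ (a+b+1/3)^α. -/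
lemma K3 {a b : ℝ} (ha0 : 0 ≤ a) (ha : a ≤ 1/3) (hb0 : 0 ≤ b) (hb : b ≤ 1/3) :
    a ^ α + b ^ α ≤ (a + b + 1/3) ^ α := by
  have hc := conc (x := a) (y := b) (p := 1/2) (q := 1/2) ha0 hb0 (by norm_num) (by norm_num)
    (by norm_num)
  have he : (1/2*a + 1/2*b : ℝ) = (a+b)/2 := by ring
  rw [he] at hc
  -- a^α + b^α ≤ 2 * ((a+b)/2)^α = (3(a+b)/2)^α ≤ (a+b+1/3)^α
  have h2 : 2 * ((a+b)/2) ^ α = (3 * ((a+b)/2)) ^ α := (rpow_three_mul (by linarith)).symm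
  have h3 : (3 * ((a+b)/2)) ^ α ≤ (a + b + 1/3) ^ α := rpow_mono (by linarith) (by linarith)
  linarith [hc, h2, h3]

lemma third_rpow : ((1:ℝ)/3) ^ α = 1/2 := by
  have h := rpow_three_mul (t := 1/3) (by norm_num)
  norm_num at h
  linarith


section Cantor

variable {c : ℝ → ℝ} (hc : IsCantorFunction c)
include hc

lemma c_mono' {u v : ℝ} (h0 : 0 ≤ u) (h : u ≤ v) (h1 : v ≤ 1) : c u ≤ c v :=
  hc.1 (Set.mem_Icc.mpr ⟨h0, le_trans h h1⟩) (Set.mem_Icc.mpr ⟨le_trans h0 h, h1⟩) h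

lemma c_mono : MonotoneOn c (Set.Icc 0 1) := hc.1
lemma c0 : c 0 = 0 := hc.2.1
lemma c1 : c 1 = 1 := hc.2.2.1

lemma rel1 {t : ℝ} (h0 : 0 ≤ t) (h1 : t ≤ 1/3) : c t = c (3*t) / 2 := by
  have := hc.2.2.2.1 (3*t) (Set.mem_Icc.mpr ⟨by linarith, by linarith⟩)
  rw [show (3*t)/3 = t by ring] at this
  exact this

lemma rel2 {t : ℝ} (h0 : 2/3 ≤ t) (h1 : t ≤ 1) : c t = (1 + c (3*t - 2)) / 2 := by
  have := hc.2.2.2.2 (3*t - 2) (Set.mem_Icc.mpr ⟨by linarith, by linarith⟩)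
  rw [show (3*t - 2 + 2)/3 = t by ring] at this
  exact this

lemma c_nonneg {t : ℝ} (h0 : 0 ≤ t) (h1 : t ≤ 1) : 0 ≤ c t := by
  have := c_mono hc (Set.mem_Icc.mpr ⟨le_refl 0, by norm_num⟩)
    (Set.mem_Icc.mpr ⟨h0, h1⟩) h0
  rw [c0 hc] at this; exact this

lemma c_le_one {t : ℝ} (h0 : 0 ≤ t) (h1 : t ≤ 1) : c t ≤ 1 := by
  have := c_mono hc (Set.mem_Icc.mpr ⟨h0, h1⟩)
    (Set.mem_Icc.mpr ⟨by norm_num, le_refl 1⟩) h1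
  rw [c1 hc] at this; exact this

lemma c13 : c (1/3) = 1/2 := by
  have h := rel1 hc (t := 1/3) (by norm_num) (le_refl _)
  norm_num [c1 hc] at h; exact h

lemma c23 : c (2/3) = 1/2 := by
  have h := rel2 hc (t := 2/3) (le_refl _) (by norm_num)
  norm_num [c0 hc] at h; exact h

lemma c_mid {t : ℝ} (h0 : 1/3 ≤ t) (h1 : t ≤ 2/3) : c t = 1/2 := by
  have hl := c_mono hc (Set.mem_Icc.mpr ⟨by norm_num, by norm_num⟩)
    (Set.mem_Icc.mpr ⟨by linarith, by linarith⟩) h0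
  have hr := c_mono hc (Set.mem_Icc.mpr ⟨by linarith, by linarith⟩)
    (Set.mem_Icc.mpr ⟨by norm_num, by norm_num⟩) h1
  rw [c13 hc] at hl; rw [c23 hc] at hr; linarith

lemma prefix_aux (n : ℕ) : ∀ t, 0 ≤ t → t ≤ 1 → c t ≤ t ^ α + (1/2)^n := by
  induction n with
  | zero =>
    intro t h0 h1
    have := c_le_one hc h0 h1
    have := rpow_nonneg' (t := t) h0
    simp only [pow_zero]; linarith
  | succ n ih =>
    intro t h0 h1
    rcases le_or_gt t (1/3) with h3 | h3
    · have hr := rel1 hc h0 h3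
      have hi := ih (3*t) (by linarith) (by linarith)
      rw [rpow_three_mul h0] at hi
      rw [hr]
      have : ((1:ℝ)/2)^(n+1) = (1/2)^n/2 := by ring
      linarith
    · rcases le_or_gt t (2/3) with h6 | h6
      · have := c_mid hc h3.le h6
        have ht : ((1:ℝ)/3) ^ α ≤ t ^ α := rpow_mono (by norm_num) h3.le
        rw [third_rpow] at ht
        have : (0:ℝ) ≤ (1/2)^(n+1) := by positivity
        linarith
      · have hr := rel2 hc h6.le h1
        have hi := ih (3*t - 2) (by linarith) (by linarith)
        have hk := one_add_rpow_le (u := 3*t - 2) (by linarith) (by linarith)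
        rw [show 3*t - 2 + 2 = 3*t by ring, rpow_three_mul h0] at hk
        have : ((1:ℝ)/2)^(n+1) = (1/2)^n/2 := by ring
        rw [hr]
        linarith

lemma c_prefix {t : ℝ} (h0 : 0 ≤ t) (h1 : t ≤ 1) : c t ≤ t ^ α := by
  refine le_of_forall_pos_le_add (fun ε hε => ?_)
  obtain ⟨n, hn⟩ := exists_pow_lt_of_lt_one hε (by norm_num : (1:ℝ)/2 < 1)
  have := prefix_aux hc n t h0 h1
  linarith

lemma suffix_aux (n : ℕ) : ∀ t, 0 ≤ t → t ≤ 1 → 1 - c t ≤ (1-t) ^ α + (1/2)^n := by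
  induction n with
  | zero =>
    intro t h0 h1
    have := c_nonneg hc h0 h1
    have := rpow_nonneg' (t := 1-t) (by linarith)
    simp only [pow_zero]; linarith
  | succ n ih =>
    intro t h0 h1
    rcases le_or_gt (2/3) t with h6 | h6
    · have hr := rel2 hc h6 h1
      have hi := ih (3*t - 2) (by linarith) (by linarith)
      rw [show (1 - (3*t-2)) = 3*(1-t) by ring, rpow_three_mul (by linarith)] at hi
      rw [hr]
      have : ((1:ℝ)/2)^(n+1) = (1/2)^n/2 := by ring
      linarith
    · rcases le_or_gt (1/3) t with h3 | h3
      · have := c_mid hc h3 h6.le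
        have ht : ((1:ℝ)/3) ^ α ≤ (1-t) ^ α := rpow_mono (by norm_num) (by linarith)
        rw [third_rpow] at ht
        have : (0:ℝ) ≤ (1/2)^(n+1) := by positivity
        linarith
      · have hr := rel1 hc h0 h3.le
        have hi := ih (3*t) (by linarith) (by linarith)
        have hk := one_add_rpow_le (u := 1 - 3*t) (by linarith) (by linarith)
        rw [show 1 - 3*t + 2 = 3*(1-t) by ring, rpow_three_mul (by linarith)] at hk
        have : ((1:ℝ)/2)^(n+1) = (1/2)^n/2 := by ring
        rw [hr]
        linarith

lemma c_suffix {t : ℝ} (h0 : 0 ≤ t) (h1 : t ≤ 1) : 1 - c t ≤ (1-t) ^ α := by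
  refine le_of_forall_pos_le_add (fun ε hε => ?_)
  obtain ⟨n, hn⟩ := exists_pow_lt_of_lt_one hε (by norm_num : (1:ℝ)/2 < 1)
  have := suffix_aux hc n t h0 h1
  linarith

lemma holder_aux (n : ℕ) : ∀ u v, 0 ≤ u → u ≤ v → v ≤ 1 →
    c v - c u ≤ (v-u) ^ α + (1/2)^n := by
  induction n with
  | zero =>
    intro u v h0 huv h1
    have := c_le_one hc (le_trans h0 huv) h1
    have := c_nonneg hc h0 (le_trans huv h1)
    have := rpow_nonneg' (t := v - u) (by linarith)
    simp only [pow_zero]; linarith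
  | succ n ih =>
    intro u v h0 huv h1
    have hpow : (0:ℝ) ≤ (1/2)^(n+1) := by positivity
    have hhalf : ((1:ℝ)/2)^(n+1) = (1/2)^n/2 := by ring
    rcases le_or_gt v (1/3) with hv3 | hv3
    · -- scale low
      have hru := rel1 hc h0 (le_trans huv hv3)
      have hrv := rel1 hc (le_trans h0 huv) hv3
      have hi := ih (3*u) (3*v) (by linarith) (by linarith) (by linarith)
      rw [show 3*v - 3*u = 3*(v-u) by ring, rpow_three_mul (by linarith)] at hi
      rw [hru, hrv]; linarith
    · rcases le_or_gt (2/3) u with hu6 | hu6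
      · -- scale high
        have hru := rel2 hc hu6 (le_trans huv h1)
        have hrv := rel2 hc (le_trans hu6 huv) h1
        have hi := ih (3*u-2) (3*v-2) (by linarith) (by linarith) (by linarith)
        rw [show 3*v - 2 - (3*u - 2) = 3*(v-u) by ring, rpow_three_mul (by linarith)] at hi
        rw [hru, hrv]; linarith
      · rcases le_or_gt u (1/3) with hu3 | hu3
        · rcases le_or_gt v (2/3) with hv6 | hv6
          · -- straddle left: c v = 1/2, use suffix on 3u
            have hcv := c_mid hc hv3.le hv6
            have hru := rel1 hc h0 hu3
            have hs := c_suffix hc (t := 3*u) (by linarith) (by linarith)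
            rw [show (1 : ℝ) - 3*u = 3*(1/3-u) by ring, rpow_three_mul (by linarith)] at hs
            have hm : ((1:ℝ)/3 - u) ^ α ≤ (v - u) ^ α := rpow_mono (by linarith) (by linarith)
            rw [hcv, hru]; linarith
          · -- double straddle
            have h2 := rel2 hc hv6.le h1
            have h1' := rel1 hc h0 hu3
            have hp := c_prefix hc (t := 3*v-2) (by linarith) (by linarith)
            have hep : ((3*v-2:ℝ)) ^ α = 2*(v-2/3) ^ α := by
              rw [show (3*v-2:ℝ) = 3*(v-2/3) by ring, rpow_three_mul (by linarith)]
            have hs := c_suffix hc (t := 3*u) (by linarith) (by linarith)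
            have hes : ((1 - 3*u:ℝ)) ^ α = 2*(1/3-u) ^ α := by
              rw [show (1-3*u:ℝ) = 3*(1/3-u) by ring, rpow_three_mul (by linarith)]
            have hk := K3 (a := v - 2/3) (b := 1/3 - u) (by linarith) (by linarith)
              (by linarith) (by linarith)
            rw [show v - 2/3 + (1/3 - u) + 1/3 = v - u by ring] at hk
            rw [h2, h1']; linarith
        · -- u in middle
          rcases le_or_gt v (2/3) with hv6 | hv6
          · have hcu := c_mid hc hu3.le (by linarith)
            have hcv := c_mid hc (by linarith) hv6
            have := rpow_nonneg' (t := v - u) (by linarith)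
            linarith
          · -- straddle right
            have hcu := c_mid hc hu3.le hu6.le
            have h2 := rel2 hc hv6.le h1
            have hp := c_prefix hc (t := 3*v-2) (by linarith) (by linarith)
            have hep : ((3*v-2:ℝ)) ^ α = 2*(v-2/3) ^ α := by
              rw [show (3*v-2:ℝ) = 3*(v-2/3) by ring, rpow_three_mul (by linarith)]
            have hm : (v - 2/3) ^ α ≤ (v - u) ^ α := rpow_mono (by linarith) (by linarith)
            rw [hcu, h2]; linarith

lemma c_holder {u v : ℝ} (h0 : 0 ≤ u) (huv : u ≤ v) (h1 : v ≤ 1) :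
    c v - c u ≤ (v-u) ^ α := by
  refine le_of_forall_pos_le_add (fun ε hε => ?_)
  obtain ⟨n, hn⟩ := exists_pow_lt_of_lt_one hε (by norm_num : (1:ℝ)/2 < 1)
  have := holder_aux hc n u v h0 huv h1
  linarith

end Cantor

lemma zero_rpow' : (0:ℝ) ^ α = 0 := Real.zero_rpow (ne_of_gt alpha_pos)
lemma one_rpow' : (1:ℝ) ^ α = 1 := Real.one_rpow α

section Evals

lemma G_eval1 {x : ℝ} (h1 : x ≤ 1) : paperG x = 1 - (1-x) ^ α := by
  unfold paperG; rw [if_pos h1]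

lemma G_eval2 {x : ℝ} (h0 : 1 ≤ x) (h1 : x ≤ 2) : paperG x = 1 + (x-1) ^ α := by
  unfold paperG
  rcases eq_or_lt_of_le h0 with h|h
  · rw [← h]; norm_num [zero_rpow']
  · rw [if_neg (by linarith), if_pos h1]

lemma G_eval3 {x : ℝ} (h0 : 2 ≤ x) (h1 : x ≤ 3) : paperG x = x := by
  unfold paperG
  rcases eq_or_lt_of_le h0 with h|h
  · rw [← h]; norm_num [one_rpow']
  · rw [if_neg (by linarith), if_neg (by linarith), if_pos h1]

lemma G_eval4 {x : ℝ} (h0 : 3 ≤ x) (h1 : x ≤ 4) : paperG x = 4 - (4-x) ^ α := by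
  unfold paperG
  rcases eq_or_lt_of_le h0 with h|h
  · rw [← h]; norm_num [one_rpow']
  · rw [if_neg (by linarith), if_neg (by linarith), if_neg (by linarith), if_pos h1,
      show (1 - (x-3) : ℝ) = 4 - x by ring]
    ring

lemma G_eval5 {x : ℝ} (h0 : 4 ≤ x) (h1 : x ≤ 5) : paperG x = 4 + (x-4) ^ α := by
  unfold paperG
  rcases eq_or_lt_of_le h0 with h|h
  · rw [← h]; norm_num [zero_rpow']
  · rw [if_neg (by linarith), if_neg (by linarith), if_neg (by linarith), if_neg (by linarith),
      if_pos h1]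

lemma G_eval6 {x : ℝ} (h0 : 5 ≤ x) (h1 : x ≤ 6) : paperG x = 5 + (x-5) ^ α := by
  unfold paperG
  rcases eq_or_lt_of_le h0 with h|h
  · rw [← h]; norm_num [zero_rpow', one_rpow']
  · rw [if_neg (by linarith), if_neg (by linarith), if_neg (by linarith), if_neg (by linarith),
      if_neg (by linarith), if_pos h1]

lemma G_eval7 {x : ℝ} (h0 : 6 ≤ x) : paperG x = 6 + (x-6) ^ α := by
  unfold paperG
  rcases eq_or_lt_of_le h0 with h|h
  · rw [← h]; norm_num [zero_rpow', one_rpow']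
  · rw [if_neg (by linarith), if_neg (by linarith), if_neg (by linarith), if_neg (by linarith),
      if_neg (by linarith), if_neg (by linarith)]

variable {c : ℝ → ℝ} (hc : IsCantorFunction c)
include hc

lemma F_eval3 {x : ℝ} (h0 : 2 ≤ x) (h1 : x ≤ 3) : paperF c x = 2 + c (x-2) := by
  unfold paperF
  rcases eq_or_lt_of_le h0 with h|h
  · rw [← h]; norm_num [one_rpow', hc.2.1]
  · rw [if_neg (by linarith), if_neg (by linarith), if_pos h1]

lemma FG_eq {x : ℝ} (h : x ≤ 2 ∨ 3 ≤ x) : paperF c x = paperG x := by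
  unfold paperF paperG
  split_ifs with h1 h2 h3
  · rfl
  · rfl
  · rcases h with h|h
    · linarith
    · have hx : x = 3 := le_antisymm h3 h
      rw [hx]; norm_num [hc.2.2.1]
  all_goals rfl

end Evals

section Aux

lemma abs_sub_le' (a b : ℝ) : |a - b| ≤ |a| + |b| := by
  calc |a - b| = |a + (-b)| := by rw [sub_eq_add_neg]
  _ ≤ |a| + |-b| := abs_add_le a (-b)
  _ = |a| + |b| := by rw [abs_neg]

lemma abs_helper {a b a' b' : ℝ} (h1 : a ≤ b) (h2 : b - a ≤ b' - a') : |a - b| ≤ |a' - b'| := by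
  rw [abs_sub_comm a b, abs_of_nonneg (by linarith)]
  calc b - a ≤ b' - a' := h2
  _ ≤ |b' - a'| := le_abs_self _
  _ = |a' - b'| := abs_sub_comm _ _

lemma gshift {y : ℝ} (h0 : 3 ≤ y) (h1 : y ≤ 6) : paperG y + 1 ≤ paperG (y+1) := by
  rcases le_or_gt y 4 with h|h
  · rw [G_eval4 h0 h, G_eval5 (by linarith) (by linarith)]
    have hk := one_le_rpow_add (p := y-3) (by linarith) (by linarith)
    rw [show (1-(y-3):ℝ) = 4-y by ring] at hk
    rw [show (y+1-4 : ℝ) = y-3 by ring]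
    linarith
  · rcases le_or_gt y 5 with h'|h'
    · rw [G_eval5 h.le h', G_eval6 (by linarith) (by linarith),
        show (y+1-5:ℝ) = y-4 by ring]
      linarith
    · rw [G_eval6 h'.le h1, G_eval7 (by linarith), show (y+1-6:ℝ) = y-5 by ring]
      linarith

lemma g_ge3 {y : ℝ} (h0 : 3 ≤ y) (h1 : y ≤ 7) : 3 ≤ paperG y := by
  rcases le_or_gt y 4 with h|h
  · rw [G_eval4 h0 h]
    have := rpow_le_one' (t := 4-y) (by linarith) (by linarith)
    linarith
  · rcases le_or_gt y 5 with h'|h'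
    · rw [G_eval5 h.le h']
      have := rpow_nonneg' (t := y-4) (by linarith); linarith
    · rcases le_or_gt y 6 with h''|h''
      · rw [G_eval6 h'.le h'']
        have := rpow_nonneg' (t := y-5) (by linarith); linarith
      · rw [G_eval7 h''.le]
        have := rpow_nonneg' (t := y-6) (by linarith); linarith

lemma G_mem {x : ℝ} (h0 : 0 ≤ x) (h7 : x ≤ 7) : 0 ≤ paperG x ∧ paperG x ≤ 7 := by
  rcases le_or_gt x 1 with h|h
  · rw [G_eval1 h]
    have := rpow_le_one' (t := 1-x) (by linarith) (by linarith)
    have := rpow_nonneg' (t := 1-x) (by linarith)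
    constructor <;> linarith
  · rcases le_or_gt x 2 with h'|h'
    · rw [G_eval2 h.le h']
      have := rpow_le_one' (t := x-1) (by linarith) (by linarith)
      have := rpow_nonneg' (t := x-1) (by linarith)
      constructor <;> linarith
    · rcases le_or_gt x 3 with h''|h''
      · rw [G_eval3 h'.le h'']; constructor <;> linarith
      · rcases le_or_gt x 4 with h4|h4
        · rw [G_eval4 h''.le h4]
          have := rpow_le_one' (t := 4-x) (by linarith) (by linarith)
          have := rpow_nonneg' (t := 4-x) (by linarith)
          constructor <;> linarith
        · rcases le_or_gt x 5 with h5|h5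
          · rw [G_eval5 h4.le h5]
            have := rpow_le_one' (t := x-4) (by linarith) (by linarith)
            have := rpow_nonneg' (t := x-4) (by linarith)
            constructor <;> linarith
          · rcases le_or_gt x 6 with h6|h6
            · rw [G_eval6 h5.le h6]
              have := rpow_le_one' (t := x-5) (by linarith) (by linarith)
              have := rpow_nonneg' (t := x-5) (by linarith)
              constructor <;> linarith
            · rw [G_eval7 h6.le]
              have := rpow_le_one' (t := x-6) (by linarith) (by linarith)
              have := rpow_nonneg' (t := x-6) (by linarith)
              constructor <;> linarith

lemma G_bound {x : ℝ} (h : x ∈ Set.Icc (0:ℝ) 7) : |paperG x| ≤ 7 := by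
  obtain ⟨h1, h2⟩ := G_mem h.1 h.2
  rw [abs_of_nonneg h1]; exact h2

variable {c : ℝ → ℝ} (hc : IsCantorFunction c)
include hc

lemma F_bound {x : ℝ} (h : x ∈ Set.Icc (0:ℝ) 7) : |paperF c x| ≤ 7 := by
  by_cases hr : x ≤ 2 ∨ 3 ≤ x
  · rw [FG_eq hc hr]; exact G_bound h
  · push_neg at hr
    rw [F_eval3 hc (by linarith [hr.1]) (by linarith [hr.2])]
    have h1 := c_nonneg hc (t := x-2) (by linarith [hr.1]) (by linarith [hr.2])
    have h2 := c_le_one hc (t := x-2) (by linarith [hr.1]) (by linarith [hr.2])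
    rw [abs_of_nonneg (by linarith)]; linarith

lemma dominate_FG {x y : ℝ} (hx : x ∈ Set.Icc (0:ℝ) 7) (hy : y ∈ Set.Icc (0:ℝ) 7)
    (hxy : x ≤ y) :
    ∃ x' y', x' ∈ Set.Icc (0:ℝ) 7 ∧ y' ∈ Set.Icc (0:ℝ) 7 ∧ x' ≤ y' ∧ y' - x' ≤ y - x ∧
      |paperF c x - paperF c y| ≤ |paperG x' - paperG y'| := by
  obtain ⟨hx0, hx7⟩ := hx
  obtain ⟨hy0, hy7⟩ := hy
  by_cases hxr : x ≤ 2 ∨ 3 ≤ x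
  · by_cases hyr : y ≤ 2 ∨ 3 ≤ y
    · exact ⟨x, y, ⟨hx0, hx7⟩, ⟨hy0, hy7⟩, hxy, le_refl _,
        le_of_eq (by rw [FG_eq hc hxr, FG_eq hc hyr])⟩
    · -- y ∈ (2,3), x ≤ 2
      push_neg at hyr
      obtain ⟨hy2, hy3⟩ := hyr
      have hx2 : x ≤ 2 := by rcases hxr with h|h <;> linarith
      have hfy : paperF c y = 2 + c (y-2) := F_eval3 hc (by linarith) (by linarith)
      have hcp := c_prefix hc (t := y-2) (by linarith) (by linarith)
      have hc0 := c_nonneg hc (t := y-2) (by linarith) (by linarith)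
      rcases le_or_gt 1 x with hx1 | hx1
      · -- B1 : pair (x+2, y+2)
        have hfx : paperF c x = 1 + (x-1) ^ α := by
          rw [FG_eq hc (Or.inl hx2), G_eval2 hx1 hx2]
        have hgx : paperG (x+2) = 4 - (2-x) ^ α := by
          rw [G_eval4 (by linarith) (by linarith), show (4-(x+2):ℝ) = 2-x by ring]
        have hgy : paperG (y+2) = 4 + (y-2) ^ α := by
          rw [G_eval5 (by linarith) (by linarith), show (y+2-4:ℝ) = y-2 by ring]
        have hk := one_le_rpow_add (p := x-1) (by linarith) (by linarith)
        rw [show (1-(x-1):ℝ) = 2-x by ring] at hk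
        have hb := rpow_le_one' (t := x-1) (by linarith) (by linarith)
        refine ⟨x+2, y+2, ⟨by linarith, by linarith⟩, ⟨by linarith, by linarith⟩,
          by linarith, by linarith, abs_helper ?_ ?_⟩
        · rw [hfx, hfy]; linarith
        · rw [hfx, hfy, hgx, hgy]; linarith
      · -- B2 : pair (x+3, y+3)
        have hfx : paperF c x = 1 - (1-x) ^ α := by
          rw [FG_eq hc (Or.inl hx2), G_eval1 hx1.le]
        have hgx : paperG (x+3) = 4 - (1-x) ^ α := by
          rw [G_eval4 (by linarith) (by linarith), show (4-(x+3):ℝ) = 1-x by ring]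
        have hgy : paperG (y+3) = 5 + (y-2) ^ α := by
          rw [G_eval6 (by linarith) (by linarith), show (y+3-5:ℝ) = y-2 by ring]
        have hb := rpow_nonneg' (t := 1-x) (by linarith)
        refine ⟨x+3, y+3, ⟨by linarith, by linarith⟩, ⟨by linarith, by linarith⟩,
          by linarith, by linarith, abs_helper ?_ ?_⟩
        · rw [hfx, hfy]; linarith
        · rw [hfx, hfy, hgx, hgy]; linarith
  · -- x ∈ (2,3)
    push_neg at hxr
    obtain ⟨hx2, hx3⟩ := hxr
    have hfx : paperF c x = 2 + c (x-2) := F_eval3 hc (by linarith) (by linarith)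
    have hcx0 := c_nonneg hc (t := x-2) (by linarith) (by linarith)
    have hcx1 := c_le_one hc (t := x-2) (by linarith) (by linarith)
    have hsfx := c_suffix hc (t := x-2) (by linarith) (by linarith)
    rw [show (1-(x-2):ℝ) = 3-x by ring] at hsfx
    rcases le_or_gt y 3 with hy3 | hy3
    · -- A1 : pair (4, 4+(y-x))
      have hfy : paperF c y = 2 + c (y-2) := F_eval3 hc (by linarith) (by linarith)
      have hg4 : paperG 4 = 4 := by
        rw [G_eval5 le_rfl (by norm_num)]; norm_num [zero_rpow']
      have hgy : paperG (4+(y-x)) = 4 + (y-x) ^ α := by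
        rw [G_eval5 (by linarith) (by linarith), show (4+(y-x)-4:ℝ) = y-x by ring]
      have hh := c_holder hc (u := x-2) (v := y-2) (by linarith) (by linarith) (by linarith)
      rw [show (y-2-(x-2):ℝ) = y-x by ring] at hh
      have hmono := c_mono' hc (u := x-2) (v := y-2) (by linarith) (by linarith) (by linarith)
      refine ⟨4, 4+(y-x), ⟨by norm_num, by norm_num⟩, ⟨by linarith, by linarith⟩,
        by linarith, by linarith, abs_helper ?_ ?_⟩
      · rw [hfx, hfy]; linarith
      · rw [hfx, hfy, hg4, hgy]; linarith
    · rcases le_or_gt y 6 with hy6 | hy6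
      · -- A2 : pair (x+1, y+1)
        have hfy : paperF c y = paperG y := FG_eq hc (Or.inr (by linarith))
        have hgx : paperG (x+1) = 4 - (3-x) ^ α := by
          rw [G_eval4 (by linarith) (by linarith), show (4-(x+1):ℝ) = 3-x by ring]
        have hsh := gshift (y := y) (by linarith) (by linarith)
        have hge := g_ge3 (y := y) (by linarith) (by linarith)
        refine ⟨x+1, y+1, ⟨by linarith, by linarith⟩, ⟨by linarith, by linarith⟩,
          by linarith, by linarith, abs_helper ?_ ?_⟩
        · rw [hfx, hfy]; linarith
        · rw [hfx, hfy, hgx]; linarith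
      · -- A3 : pair (x-2, y-2)
        have hfy : paperF c y = 6 + (y-6) ^ α := by
          rw [FG_eq hc (Or.inr (by linarith)), G_eval7 (by linarith)]
        have hgx : paperG (x-2) = 1 - (3-x) ^ α := by
          rw [G_eval1 (by linarith), show (1-(x-2):ℝ) = 3-x by ring]
        have hgy : paperG (y-2) = 4 + (y-6) ^ α := by
          rw [G_eval5 (by linarith) (by linarith), show (y-2-4:ℝ) = y-6 by ring]
        have hb := rpow_nonneg' (t := y-6) (by linarith)
        refine ⟨x-2, y-2, ⟨by linarith, by linarith⟩, ⟨by linarith, by linarith⟩,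
          by linarith, by linarith, abs_helper ?_ ?_⟩
        · rw [hfx, hfy]; linarith
        · rw [hfx, hfy, hgx, hgy]; linarith

lemma dominate_GF {x y : ℝ} (hx : x ∈ Set.Icc (0:ℝ) 7) (hy : y ∈ Set.Icc (0:ℝ) 7)
    (hxy : x ≤ y) :
    ∃ x' y', x' ∈ Set.Icc (0:ℝ) 7 ∧ y' ∈ Set.Icc (0:ℝ) 7 ∧ x' ≤ y' ∧ y' - x' ≤ y - x ∧
      |paperG x - paperG y| ≤ |paperF c x' - paperF c y'| := by
  obtain ⟨hx0, hx7⟩ := hx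
  obtain ⟨hy0, hy7⟩ := hy
  by_cases hxr : x ≤ 2 ∨ 3 ≤ x
  · by_cases hyr : y ≤ 2 ∨ 3 ≤ y
    · exact ⟨x, y, ⟨hx0, hx7⟩, ⟨hy0, hy7⟩, hxy, le_refl _,
        le_of_eq (by rw [FG_eq hc hxr, FG_eq hc hyr])⟩
    · push_neg at hyr
      obtain ⟨hy2, hy3⟩ := hyr
      have hx2 : x ≤ 2 := by rcases hxr with h|h <;> linarith
      have hgy : paperG y = y := G_eval3 (by linarith) (by linarith)
      have hsy := rpow_self_le (t := y-2) (by linarith) (by linarith)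
      rcases le_or_gt 1 x with hx1 | hx1
      · -- B1 : pair (x+2, y+2)
        have hgx : paperG x = 1 + (x-1) ^ α := G_eval2 hx1 hx2
        have hfx : paperF c (x+2) = 4 - (2-x) ^ α := by
          rw [FG_eq hc (Or.inr (by linarith)), G_eval4 (by linarith) (by linarith),
            show (4-(x+2):ℝ) = 2-x by ring]
        have hfy : paperF c (y+2) = 4 + (y-2) ^ α := by
          rw [FG_eq hc (Or.inr (by linarith)), G_eval5 (by linarith) (by linarith),
            show (y+2-4:ℝ) = y-2 by ring]
        have hk := one_le_rpow_add (p := x-1) (by linarith) (by linarith)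
        rw [show (1-(x-1):ℝ) = 2-x by ring] at hk
        have hb := rpow_le_one' (t := x-1) (by linarith) (by linarith)
        have hb2 := rpow_nonneg' (t := x-1) (by linarith)
        refine ⟨x+2, y+2, ⟨by linarith, by linarith⟩, ⟨by linarith, by linarith⟩,
          by linarith, by linarith, abs_helper ?_ ?_⟩
        · rw [hgx, hgy]; linarith
        · rw [hgx, hgy, hfx, hfy]; linarith
      · -- B2 : pair (x+3, y+3)
        have hgx : paperG x = 1 - (1-x) ^ α := G_eval1 hx1.le
        have hfx : paperF c (x+3) = 4 - (1-x) ^ α := by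
          rw [FG_eq hc (Or.inr (by linarith)), G_eval4 (by linarith) (by linarith),
            show (4-(x+3):ℝ) = 1-x by ring]
        have hfy : paperF c (y+3) = 5 + (y-2) ^ α := by
          rw [FG_eq hc (Or.inr (by linarith)), G_eval6 (by linarith) (by linarith),
            show (y+3-5:ℝ) = y-2 by ring]
        have hb := rpow_nonneg' (t := 1-x) (by linarith)
        refine ⟨x+3, y+3, ⟨by linarith, by linarith⟩, ⟨by linarith, by linarith⟩,
          by linarith, by linarith, abs_helper ?_ ?_⟩
        · rw [hgx, hgy]; linarith
        · rw [hgx, hgy, hfx, hfy]; linarith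
  · push_neg at hxr
    obtain ⟨hx2, hx3⟩ := hxr
    have hgx : paperG x = x := G_eval3 (by linarith) (by linarith)
    have hsx := rpow_self_le (t := 3-x) (by linarith) (by linarith)
    rcases le_or_gt y 3 with hy3 | hy3
    · -- A1 : pair (4, 4+(y-x))
      have hgy : paperG y = y := G_eval3 (by linarith) (by linarith)
      have hf4 : paperF c 4 = 4 := by
        rw [FG_eq hc (Or.inr (by norm_num)), G_eval5 le_rfl (by norm_num)]
        norm_num [zero_rpow']
      have hfy : paperF c (4+(y-x)) = 4 + (y-x) ^ α := by
        rw [FG_eq hc (Or.inr (by linarith)), G_eval5 (by linarith) (by linarith),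
          show (4+(y-x)-4:ℝ) = y-x by ring]
      have hs := rpow_self_le (t := y-x) (by linarith) (by linarith)
      refine ⟨4, 4+(y-x), ⟨by norm_num, by norm_num⟩, ⟨by linarith, by linarith⟩,
        by linarith, by linarith, abs_helper ?_ ?_⟩
      · rw [hgx, hgy]; linarith
      · rw [hgx, hgy, hf4, hfy]; linarith
    · rcases le_or_gt y 6 with hy6 | hy6
      · -- A2 : pair (x+1, y+1)
        have hfx : paperF c (x+1) = 4 - (3-x) ^ α := by
          rw [FG_eq hc (Or.inr (by linarith)), G_eval4 (by linarith) (by linarith),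
            show (4-(x+1):ℝ) = 3-x by ring]
        have hfy : paperF c (y+1) = paperG (y+1) := FG_eq hc (Or.inr (by linarith))
        have hsh := gshift (y := y) (by linarith) (by linarith)
        have hge := g_ge3 (y := y) (by linarith) (by linarith)
        refine ⟨x+1, y+1, ⟨by linarith, by linarith⟩, ⟨by linarith, by linarith⟩,
          by linarith, by linarith, abs_helper ?_ ?_⟩
        · rw [hgx]; linarith
        · rw [hgx, hfx, hfy]; linarith
      · -- A3 : pair (x-2, y-2)
        have hgy : paperG y = 6 + (y-6) ^ α := G_eval7 (by linarith)
        have hfx : paperF c (x-2) = 1 - (3-x) ^ α := by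
          rw [FG_eq hc (Or.inl (by linarith)), G_eval1 (by linarith),
            show (1-(x-2):ℝ) = 3-x by ring]
        have hfy : paperF c (y-2) = 4 + (y-6) ^ α := by
          rw [FG_eq hc (Or.inr (by linarith)), G_eval5 (by linarith) (by linarith),
            show (y-2-4:ℝ) = y-6 by ring]
        have hb := rpow_nonneg' (t := y-6) (by linarith)
        refine ⟨x-2, y-2, ⟨by linarith, by linarith⟩, ⟨by linarith, by linarith⟩,
          by linarith, by linarith, abs_helper ?_ ?_⟩
        · rw [hgx, hgy]; linarith
        · rw [hgx, hgy, hfx, hfy]; linarith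

end Aux

lemma abs_sub_le'' (a b : ℝ) : |a - b| ≤ |a| + |b| := by
  calc |a - b| = |a + (-b)| := by rw [sub_eq_add_neg]
  _ ≤ |a| + |-b| := abs_add_le a (-b)
  _ = |a| + |b| := by rw [abs_neg]

lemma modCont_mono {f g : ℝ → ℝ} {δ : ℝ} (hδ : 0 ≤ δ)
    (hg : ∀ x, x ∈ Set.Icc (0:ℝ) 7 → |g x| ≤ 7)
    (hdom : ∀ x y, x ∈ Set.Icc (0:ℝ) 7 → y ∈ Set.Icc (0:ℝ) 7 → x ≤ y →
      ∃ x' y', x' ∈ Set.Icc (0:ℝ) 7 ∧ y' ∈ Set.Icc (0:ℝ) 7 ∧ x' ≤ y' ∧ y' - x' ≤ y - x ∧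
        |f x - f y| ≤ |g x' - g y'|) :
    modCont f 0 7 δ ≤ modCont g 0 7 δ := by
  have hbdd : BddAbove {d : ℝ | ∃ x ∈ Set.Icc (0:ℝ) 7, ∃ y ∈ Set.Icc (0:ℝ) 7,
      |x - y| ≤ δ ∧ d = |g x - g y|} := by
    refine ⟨14, fun d hd => ?_⟩
    obtain ⟨a, ha, b, hb, hab, rfl⟩ := hd
    have h1 := hg a ha
    have h2 := hg b hb
    have h3 := abs_sub_le'' (g a) (g b)
    linarith
  have hmem0 : (0:ℝ) ∈ {d : ℝ | ∃ x ∈ Set.Icc (0:ℝ) 7, ∃ y ∈ Set.Icc (0:ℝ) 7,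
      |x - y| ≤ δ ∧ d = |g x - g y|} :=
    ⟨0, ⟨le_refl 0, by norm_num⟩, 0, ⟨le_refl 0, by norm_num⟩, by simpa using hδ, by simp⟩
  unfold modCont
  apply Real.sSup_le
  · rintro d ⟨a, ha, b, hb, hab, rfl⟩
    rcases le_total a b with h | h
    · obtain ⟨x', y', hx', hy', hord, hdist, hle⟩ := hdom a b ha hb h
      refine le_trans hle (le_csSup hbdd ⟨x', hx', y', hy', ?_, rfl⟩)
      have e1 : |x' - y'| = y' - x' := by rw [abs_sub_comm, abs_of_nonneg (by linarith)]
      have e2 : |a - b| = b - a := by rw [abs_sub_comm, abs_of_nonneg (by linarith)]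
      rw [e1]; rw [e2] at hab; linarith
    · obtain ⟨x', y', hx', hy', hord, hdist, hle⟩ := hdom b a hb ha h
      have hle' : |f a - f b| ≤ |g x' - g y'| := by rw [abs_sub_comm]; exact hle
      refine le_trans hle' (le_csSup hbdd ⟨x', hx', y', hy', ?_, rfl⟩)
      have e1 : |x' - y'| = y' - x' := by rw [abs_sub_comm, abs_of_nonneg (by linarith)]
      have e2 : |a - b| = a - b := abs_of_nonneg (by linarith)
      rw [e1]; rw [e2] at hab; linarith
  · exact le_csSup hbdd hmem0

end CF

theorem stmt11 (c : ℝ → ℝ) (hc : IsCantorFunction c) :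
    ∀ δ ∈ Set.Icc (0:ℝ) 7, modCont (paperF c) 0 7 δ = modCont paperG 0 7 δ := by
  intro δ hδ
  apply le_antisymm
  · exact CF.modCont_mono hδ.1 (fun x hx => CF.G_bound hx)
      (fun x y hx hy h => CF.dominate_FG hc hx hy h)
  · exact CF.modCont_mono hδ.1 (fun x hx => CF.F_bound hc hx)
      (fun x y hx hy h => CF.dominate_GF hc hx hy h)
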